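/- arXiv:2308.07531 — 3 statements merged into one kernel-verified Lean document; each statement's English description precedes it below -/
import Mathlib

section
/- Let n ≥ 1, a > 0, Γ₀ > 0 and M ∈ ℝⁿ. Define, for t > 0 and ξ ∈ ℝⁿ \ {0}, Ê₆(t,ξ) := −(ξ·M) · sin(a|ξ|t)/(a|ξ|) · e^{−Γ₀|ξ|² t}. Then lim_{t→∞} t^{n/2} ∫_{ℝⁿ} |Ê₆(t,ξ)|² dξ = ( σ_{n−1} / (4 n a²) ) (2Γ₀)^{−n/2} Γ(n/2) |M|², where σ_{n−1} is the surface measure of the unit sphere S^{n−1} ⊂ ℝⁿ and Γ(·) is the Gamma function. In particular, if M ≠ 0 there exist c > 0 and t₀ > 0 such that ∫_{ℝⁿ} |Ê₆(t,ξ)|² dξ ≥ c t^{−n/2} |M|² for all t ≥ t₀. -/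
/-!
After squaring, the integrand is `⟪ξ, M⟫²` times a radial function. Reflections preserve Lebesgue
measure and move any unit vector to any other, so `⟪ξ, M⟫²` may be replaced by its average
`‖M‖² ‖ξ‖² / n`. Writing `sin² = (1 - cos (2 ·)) / 2` splits the remaining radial integral into a
Gaussian integral, equal to `(π / (2Γ₀t)) ^ (n/2)`, and an oscillatory one. After the rescaling
`ξ = x / √t` the latter is `t ^ (-n/2) ∫ exp (-2Γ₀‖x‖²) cos (2a√t ‖x‖) dx`, which in polar
coordinates is a one-dimensional Fourier integral and hence `o(t ^ (-n/2))` by the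
Riemann–Lebesgue lemma. The lower bound is read off from the positive limit.
-/

open MeasureTheory Filter Real Set Topology
open scoped RealInnerProductSpace FourierTransform

theorem tendsto_integral_mul_cos_atTop {g : ℝ → ℝ} (hg : Integrable g) :
    Tendsto (fun s => ∫ v, g v * cos (s * v)) atTop (𝓝 0) := by
  have hre : ∀ w : ℝ, (∫ v, 𝐞 (-(v * w)) • (g v : ℂ)).re = ∫ v, g v * cos (2 * π * w * v) := by
    intro w
    have hint : Integrable fun v : ℝ => 𝐞 (-(v * w)) • (g v : ℂ) := by
      simpa [mul_comm] using (Real.fourierIntegral_convergent_iff w).2 hg.ofReal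
    rw [← Complex.reCLM_apply, ← ContinuousLinearMap.integral_comp_comm _ hint]
    congr 1 with v
    rw [Complex.reCLM_apply, Circle.smul_def, Real.fourierChar_apply, smul_eq_mul,
      Complex.re_mul_ofReal, Complex.exp_ofReal_mul_I_re, ← cos_neg]
    ring_nf
  -- `𝐞 x = exp (2πix)`, so frequency `s` corresponds to `w = s / (2π)`
  have hRL := (Complex.continuous_re.tendsto 0).comp
    (Real.tendsto_integral_exp_smul_cocompact fun v => (g v : ℂ))
  have hw : Tendsto (fun s : ℝ => s / (2 * π)) atTop (cocompact ℝ) :=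
    (tendsto_id.atTop_div_const (by positivity)).mono_right atTop_le_cocompact
  refine ((hRL.comp hw).congr fun s => ?_).trans (by simp)
  simp only [Function.comp_apply, hre]
  congr 1 with v
  field_simp

theorem tendsto_integral_fun_norm_mul_cos_norm_atTop {E : Type*} [NormedAddCommGroup E]
    [NormedSpace ℝ E] [Nontrivial E] [FiniteDimensional ℝ E] [MeasurableSpace E] [BorelSpace E]
    (μ : Measure E) [μ.IsAddHaarMeasure] {f : ℝ → ℝ} (hf : Integrable (fun x => f ‖x‖) μ) :
    Tendsto (fun s => ∫ x, f ‖x‖ * cos (s * ‖x‖) ∂μ) atTop (𝓝 0) := by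
  have hpolar : IntegrableOn (fun y : ℝ => y ^ (Module.finrank ℝ E - 1) * f y) (Ioi 0) :=
    (integrable_fun_norm_addHaar μ).1 hf
  have h1 := (tendsto_integral_mul_cos_atTop
    (hpolar.integrable_indicator measurableSet_Ioi)).const_mul
      (Module.finrank ℝ E * μ.real (Metric.ball 0 1))
  rw [mul_zero] at h1
  refine h1.congr fun s => ?_
  rw [integral_fun_norm_addHaar μ fun r => f r * cos (s * r), nsmul_eq_mul, smul_eq_mul, mul_assoc]
  rw [← integral_indicator measurableSet_Ioi]
  congr 3 with v
  by_cases hv : v ∈ Ioi 0 <;> simp [hv, mul_assoc]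

theorem exists_half_mul_rpow_neg_le_of_tendsto {f : ℝ → ℝ} {p L : ℝ} (hL : 0 < L)
    (h : Tendsto (fun t => t ^ p * f t) atTop (𝓝 L)) :
    ∃ t₀ > 0, ∀ t ≥ t₀, L / 2 * t ^ (-p) ≤ f t := by
  obtain ⟨t₀, ht₀⟩ := eventually_atTop.1
    ((h.eventually (eventually_ge_nhds (half_lt_self hL))).and (eventually_gt_atTop 0))
  refine ⟨max t₀ 1, by positivity, fun t ht => ?_⟩
  obtain ⟨hLt, htpos⟩ := ht₀ t (le_of_max_le_left ht)
  rw [rpow_neg htpos.le, ← div_eq_mul_inv, div_le_iff₀ (by positivity)]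
  linarith

section InnerProductSpace

variable {V : Type*} [NormedAddCommGroup V] [InnerProductSpace ℝ V] [FiniteDimensional ℝ V]
  [MeasurableSpace V] [BorelSpace V]

theorem integral_comp_inner_norm_eq_of_norm_eq {E : Type*} [NormedAddCommGroup E]
    [NormedSpace ℝ E] (F : ℝ → ℝ → E) {u v : V} (huv : ‖u‖ = ‖v‖) :
    ∫ x, F ⟪x, u⟫ ‖x‖ = ∫ x, F ⟪x, v⟫ ‖x‖ := by
  set R := (ℝ ∙ (u - v))ᗮ.reflection
  have hR : ∀ x, F ⟪R x, v⟫ ‖R x‖ = F ⟪x, u⟫ ‖x‖ := fun x => by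
    rw [← Submodule.reflection_sub huv, LinearIsometryEquiv.inner_map_map,
      LinearIsometryEquiv.norm_map]
  simpa only [hR] using
    R.measurePreserving.integral_comp R.toHomeomorph.measurableEmbedding fun x => F ⟪x, v⟫ ‖x‖

theorem integral_inner_sq_mul_fun_norm {G : ℝ → ℝ} (hG : Measurable G)
    (hint : Integrable fun x : V => ‖x‖ ^ 2 * G ‖x‖) (M : V) :
    ∫ x, ⟪x, M⟫ ^ 2 * G ‖x‖ = ‖M‖ ^ 2 / Module.finrank ℝ V * ∫ x : V, ‖x‖ ^ 2 * G ‖x‖ := by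
  rcases eq_or_ne M 0 with rfl | hM
  · simp
  set u := ‖M‖⁻¹ • M
  have hu : ‖u‖ = 1 := norm_smul_inv_norm hM
  set I := ∫ x, ⟪x, u⟫ ^ 2 * G ‖x‖
  let b := stdOrthonormalBasis ℝ V
  have hbI : ∀ i, ∫ x, ⟪x, b i⟫ ^ 2 * G ‖x‖ = I := fun i =>
    integral_comp_inner_norm_eq_of_norm_eq (fun p r => p ^ 2 * G r) (by simp [hu])
  have hb_int : ∀ i, Integrable fun x => ⟪x, b i⟫ ^ 2 * G ‖x‖ := fun i => by
    refine hint.norm.mono' (by fun_prop) (ae_of_all _ fun x => ?_)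
    have hx : ⟪x, b i⟫ ^ 2 ≤ ‖x‖ ^ 2 := by
      rw [← sq_abs]
      simpa [b.orthonormal.1 i] using
        pow_le_pow_left₀ (abs_nonneg _) (abs_real_inner_le_norm x (b i)) 2
    simp only [norm_mul, norm_pow, Real.norm_eq_abs, sq_abs, abs_norm]
    gcongr
  have hnorm : ∫ x : V, ‖x‖ ^ 2 * G ‖x‖ = Module.finrank ℝ V * I := by
    simp_rw [← b.sum_sq_inner_left, Finset.sum_mul]
    rw [integral_finsetSum _ fun i _ => hb_int i]
    simp [hbI]
  have hMu : ∫ x, ⟪x, M⟫ ^ 2 * G ‖x‖ = ‖M‖ ^ 2 * I := by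
    have hxM : ∀ x, ⟪x, M⟫ = ‖M‖ * ⟪x, u⟫ := fun x => by
      rw [real_inner_smul_right, mul_inv_cancel_left₀ (norm_ne_zero_iff.2 hM)]
    simp_rw [hxM, mul_pow, mul_assoc]
    exact integral_const_mul _ _
  have hd : (Module.finrank ℝ V : ℝ) ≠ 0 := by
    have : Nontrivial V := ⟨⟨M, 0, hM⟩⟩
    exact_mod_cast Module.finrank_pos.ne'
  rw [hMu, hnorm]
  field_simp

theorem integrable_rexp_neg_mul_sq_norm {b : ℝ} (hb : 0 < b) :
    Integrable fun x : V => rexp (-b * ‖x‖ ^ 2) :=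
  Integrable.of_integral_ne_zero <| by
    rw [GaussianFourier.integral_rexp_neg_mul_sq_norm hb]
    positivity

theorem tendsto_rpow_mul_integral_gaussian_mul_cos_atTop [Nontrivial V] {b c : ℝ} (hb : 0 < b)
    (hc : 0 < c) :
    Tendsto (fun t => t ^ ((Module.finrank ℝ V : ℝ) / 2) *
      ∫ ξ : V, rexp (-(b * t) * ‖ξ‖ ^ 2) * cos (c * t * ‖ξ‖)) atTop (𝓝 0) := by
  have hrescale : ∀ t > 0, t ^ ((Module.finrank ℝ V : ℝ) / 2) *
      ∫ ξ : V, rexp (-(b * t) * ‖ξ‖ ^ 2) * cos (c * t * ‖ξ‖)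
        = ∫ x : V, rexp (-b * ‖x‖ ^ 2) * cos (c * √t * ‖x‖) := by
    intro t ht
    have hpow : t ^ ((Module.finrank ℝ V : ℝ) / 2) = √t ^ Module.finrank ℝ V := by
      rw [sqrt_eq_rpow, ← rpow_natCast, ← rpow_mul ht.le]
      ring_nf
    have hsubst : ∀ ξ : V, rexp (-(b * t) * ‖ξ‖ ^ 2) * cos (c * t * ‖ξ‖)
        = rexp (-b * ‖√t • ξ‖ ^ 2) * cos (c * √t * ‖√t • ξ‖) := fun ξ => by
      conv_lhs => rw [← mul_self_sqrt ht.le]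
      rw [norm_smul, norm_of_nonneg (sqrt_nonneg t)]
      ring_nf
    simp_rw [hsubst]
    rw [Measure.integral_comp_smul_of_nonneg volume
      (fun x : V => rexp (-b * ‖x‖ ^ 2) * cos (c * √t * ‖x‖)) (√t) (hR := sqrt_nonneg t), hpow,
      smul_eq_mul, ← mul_assoc, mul_inv_cancel₀ (by positivity), one_mul]
  have hRL := (tendsto_integral_fun_norm_mul_cos_norm_atTop volume
    (f := fun r => rexp (-b * r ^ 2)) (integrable_rexp_neg_mul_sq_norm (V := V) hb)).comp
    (tendsto_sqrt_atTop.const_mul_atTop hc)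
  refine hRL.congr' ?_
  filter_upwards [eventually_gt_atTop 0] with t ht
  rw [hrescale t ht]
  rfl

theorem integral_sq_inner_mul_sin_div_mul_exp {a Γ₀ t : ℝ} (ha : a ≠ 0) (hΓt : 0 < Γ₀ * t)
    (M : V) :
    ∫ ξ, (⟪ξ, M⟫ * (sin (a * ‖ξ‖ * t) / (a * ‖ξ‖)) * rexp (-(Γ₀ * ‖ξ‖ ^ 2 * t))) ^ 2
      = ‖M‖ ^ 2 / (2 * Module.finrank ℝ V * a ^ 2) *
        ((∫ ξ : V, rexp (-(2 * Γ₀ * t) * ‖ξ‖ ^ 2))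
          - ∫ ξ : V, rexp (-(2 * Γ₀ * t) * ‖ξ‖ ^ 2) * cos (2 * a * t * ‖ξ‖)) := by
  set H : ℝ → ℝ := fun r => sin (a * r * t) / (a * r) * rexp (-(Γ₀ * r ^ 2 * t))
  set g : ℝ → ℝ := fun r => rexp (-(2 * Γ₀ * t) * r ^ 2)
  have hg : Integrable fun ξ : V => g ‖ξ‖ := integrable_rexp_neg_mul_sq_norm (by linarith)
  have hg_cos : Integrable fun ξ : V => g ‖ξ‖ * cos (2 * a * t * ‖ξ‖) :=
    hg.mul_bdd (by fun_prop) (ae_of_all _ fun ξ => by simpa using abs_cos_le_one _)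
  have hradial : ∀ r, r ^ 2 * H r ^ 2 = (g r - g r * cos (2 * a * t * r)) / (2 * a ^ 2) := by
    intro r
    have hrH : r * H r = sin (a * r * t) / a * rexp (-(Γ₀ * r ^ 2 * t)) := by
      rcases eq_or_ne r 0 with rfl | hr
      · simp
      · simp only [H]
        field_simp
    have hexp : rexp (-(Γ₀ * r ^ 2 * t)) ^ 2 = g r := by
      simp only [g, ← exp_nat_mul]
      ring_nf
    rw [← mul_pow, hrH, mul_pow, div_pow, hexp, sin_sq_eq_half_sub]
    field_simp
  calc _ = ∫ ξ : V, ⟪ξ, M⟫ ^ 2 * H ‖ξ‖ ^ 2 := by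
        congr 1 with ξ
        ring
    _ = ‖M‖ ^ 2 / Module.finrank ℝ V * ∫ ξ : V, ‖ξ‖ ^ 2 * H ‖ξ‖ ^ 2 :=
        integral_inner_sq_mul_fun_norm (G := fun r => H r ^ 2) (by simp only [H]; fun_prop)
          (by simp_rw [hradial]; exact (hg.sub hg_cos).div_const _) M
    _ = _ := by
        simp_rw [hradial]
        rw [integral_div, integral_sub hg hg_cos]
        simp only [g]
        ring

theorem tendsto_rpow_mul_integral_sq_inner_mul_sin_div_mul_exp [Nontrivial V] {a Γ₀ : ℝ}
    (ha : 0 < a) (hΓ₀ : 0 < Γ₀) (M : V) :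
    Tendsto (fun t => t ^ ((Module.finrank ℝ V : ℝ) / 2) *
        ∫ ξ, (⟪ξ, M⟫ * (sin (a * ‖ξ‖ * t) / (a * ‖ξ‖)) * rexp (-(Γ₀ * ‖ξ‖ ^ 2 * t))) ^ 2)
      atTop (𝓝 (‖M‖ ^ 2 / (2 * Module.finrank ℝ V * a ^ 2) *
        (π / (2 * Γ₀)) ^ ((Module.finrank ℝ V : ℝ) / 2))) := by
  set d := (Module.finrank ℝ V : ℝ)
  set C := ‖M‖ ^ 2 / (2 * d * a ^ 2)
  have hscaled : ∀ t > 0, t ^ (d / 2) *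
      ∫ ξ, (⟪ξ, M⟫ * (sin (a * ‖ξ‖ * t) / (a * ‖ξ‖)) * rexp (-(Γ₀ * ‖ξ‖ ^ 2 * t))) ^ 2
      = C * ((π / (2 * Γ₀)) ^ (d / 2) - t ^ (d / 2) *
        ∫ ξ : V, rexp (-(2 * Γ₀ * t) * ‖ξ‖ ^ 2) * cos (2 * a * t * ‖ξ‖)) := by
    intro t ht
    have hgauss : t ^ (d / 2) * (π / (2 * Γ₀ * t)) ^ (d / 2) = (π / (2 * Γ₀)) ^ (d / 2) := by
      rw [← mul_rpow ht.le (by positivity)]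
      congr 1
      field_simp
    rw [integral_sq_inner_mul_sin_div_mul_exp ha.ne' (by positivity) M,
      GaussianFourier.integral_rexp_neg_mul_sq_norm (by positivity)]
    linear_combination C * hgauss
  have hosc := tendsto_rpow_mul_integral_gaussian_mul_cos_atTop (V := V)
    (by positivity : 0 < 2 * Γ₀) (by positivity : 0 < 2 * a)
  have h := (hosc.const_sub ((π / (2 * Γ₀)) ^ (d / 2))).const_mul C
  rw [sub_zero] at h
  exact h.congr' ((eventually_gt_atTop 0).mono fun t ht => (hscaled t ht).symm)

end InnerProductSpace

/-- With `Ê₆(t,ξ) = −(ξ·M) sin(a|ξ|t)/(a|ξ|) e^{−Γ₀|ξ|²t}`, one has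
`lim_{t→∞} t^{n/2} ∫ |Ê₆(t,ξ)|² dξ = (σ_{n−1}/(4na²)) (2Γ₀)^{−n/2} Γ(n/2) |M|²`, where
`σ_{n−1} = 2π^{n/2}/Γ(n/2)` is the surface measure of the unit sphere `S^{n−1} ⊂ ℝⁿ`.
In particular, if `M ≠ 0`, `∫ |Ê₆(t,ξ)|² dξ ≥ c t^{−n/2} |M|²` for large `t`. -/
theorem stmt_13 (n : ℕ) (hn : 1 ≤ n) (a Γ₀ : ℝ) (ha : 0 < a) (hΓ₀ : 0 < Γ₀)
    (M : EuclideanSpace ℝ (Fin n))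
    (E6 : ℝ → EuclideanSpace ℝ (Fin n) → ℝ)
    (hE6 : ∀ t : ℝ, ∀ ξ : EuclideanSpace ℝ (Fin n), ξ ≠ 0 →
      E6 t ξ = -(∑ i, ξ i * M i) * (Real.sin (a * ‖ξ‖ * t) / (a * ‖ξ‖))
          * Real.exp (-(Γ₀ * ‖ξ‖ ^ 2 * t))) :
    Filter.Tendsto (fun t : ℝ => t ^ ((n : ℝ) / 2) * ∫ ξ, (E6 t ξ) ^ 2)
      Filter.atTop
      (nhds ((2 * Real.pi ^ ((n : ℝ) / 2) / Real.Gamma ((n : ℝ) / 2)) / (4 * n * a ^ 2)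
        * (2 * Γ₀) ^ (-(n : ℝ) / 2) * Real.Gamma ((n : ℝ) / 2) * ‖M‖ ^ 2)) ∧
    (M ≠ 0 → ∃ c : ℝ, 0 < c ∧ ∃ t₀ : ℝ, 0 < t₀ ∧ ∀ t : ℝ, t₀ ≤ t →
      c * t ^ (-(n : ℝ) / 2) * ‖M‖ ^ 2 ≤ ∫ ξ, (E6 t ξ) ^ 2) := by
  have : NeZero n := ⟨by omega⟩
  have hinner : ∀ ξ : EuclideanSpace ℝ (Fin n), ∑ i, ξ i * M i = ⟪ξ, M⟫ := fun ξ => by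
    simp [PiLp.inner_apply, mul_comm]
  have hE6_sq : ∀ t, ∫ ξ, E6 t ξ ^ 2 = ∫ ξ,
      (⟪ξ, M⟫ * (sin (a * ‖ξ‖ * t) / (a * ‖ξ‖)) * rexp (-(Γ₀ * ‖ξ‖ ^ 2 * t))) ^ 2 := fun t =>
    integral_congr_ae <| (volume.ae_ne 0).mono fun ξ hξ => by
      dsimp only
      rw [hE6 t ξ hξ, hinner]
      ring
  have hlim := tendsto_rpow_mul_integral_sq_inner_mul_sin_div_mul_exp ha hΓ₀ M
  simp_rw [finrank_euclideanSpace_fin, ← hE6_sq] at hlim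
  have hL : (2 * π ^ ((n : ℝ) / 2) / Gamma ((n : ℝ) / 2)) / (4 * n * a ^ 2)
      * (2 * Γ₀) ^ (-(n : ℝ) / 2) * Gamma ((n : ℝ) / 2) * ‖M‖ ^ 2
        = ‖M‖ ^ 2 / (2 * n * a ^ 2) * (π / (2 * Γ₀)) ^ ((n : ℝ) / 2) := by
    rw [neg_div, rpow_neg (by positivity), div_rpow pi_pos.le (by positivity)]
    field_simp [(Gamma_pos_of_pos (by positivity : (0 : ℝ) < n / 2)).ne']
    ring
  set L := ‖M‖ ^ 2 / (2 * n * a ^ 2) * (π / (2 * Γ₀)) ^ ((n : ℝ) / 2)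
  refine ⟨hL ▸ hlim, fun hM => ?_⟩
  have hM_pos := norm_pos_iff.2 hM
  obtain ⟨t₀, ht₀, hbound⟩ := exists_half_mul_rpow_neg_le_of_tendsto (by positivity) hlim
  refine ⟨L / 2 / ‖M‖ ^ 2, by positivity, t₀, ht₀, fun t ht => ?_⟩
  convert hbound t ht using 1
  rw [neg_div]
  field_simp
end

section
/- Let n ≥ 1, a > 0 and Γ > 0. Then lim_{t→∞} t^{n/2} ∫₀^∞ sin²(a r t) e^{−2Γ r² t} r^{n−1} dr = (1/4) (2Γ)^{−n/2} Γ(n/2), where Γ(·) on the right-hand side is the Gamma function. -/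
/-!
The substitution `r = τ / √t` turns `t ^ (n / 2) * ∫₀^∞ sin² (a r t) e^{-2Γ r² t} r^{n-1} dr` into
`∫₀^∞ sin² (a √t τ) e^{-2Γ τ²} τ^{n-1} dτ`. Since `sin² x = 1/2 - cos (2x) / 2`, the
Riemann–Lebesgue lemma leaves in the limit half of the Gaussian moment
`∫₀^∞ e^{-2Γ τ²} τ^{n-1} dτ = (2Γ)^{-n/2} Γ(n/2) / 2`.
-/

open MeasureTheory Set Filter Real Topology

theorem tendsto_setIntegral_cos_mul_cocompact {S : Set ℝ} {g : ℝ → ℝ} (hS : MeasurableSet S)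
    (hg : IntegrableOn g S) :
    Tendsto (fun w => ∫ x in S, cos (w * x) * g x) (cocompact ℝ) (𝓝 0) := by
  set f : ℝ → ℂ := fun x => ((S.indicator g x : ℝ) : ℂ)
  have hf : Integrable f := (hg.integrable_indicator hS).ofReal
  have hscale : Tendsto (fun w : ℝ => (2 * π)⁻¹ * w) (cocompact ℝ) (cocompact ℝ) :=
    tendsto_cocompact_mul_left₀ (by positivity)
  have hRL := (Complex.continuous_re.tendsto 0).comp
    ((Real.tendsto_integral_exp_smul_cocompact f).comp hscale)
  rw [Complex.zero_re] at hRL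
  -- the cosine integral is the real part of the Fourier transform of `S.indicator g` at `w / 2π`
  refine hRL.congr fun w => ?_
  have hint : Integrable fun v : ℝ => Real.fourierChar (-(v * ((2 * π)⁻¹ * w))) • f v :=
    (Real.fourierIntegral_convergent_iff' (ContinuousLinearMap.mul ℝ ℝ) _).2 hf
  simp only [Function.comp_apply]
  rw [← integral_indicator hS]
  refine (integral_re hint).symm.trans (integral_congr_ae (Eventually.of_forall fun v => ?_))
  have hphase : 2 * π * -(v * ((2 * π)⁻¹ * w)) = -(w * v) := by field_simp
  simp only [Circle.smul_def, Real.fourierChar_apply, smul_eq_mul, hphase, f,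
    indicator_mul_right]
  rw [RCLike.re_to_complex, Complex.re_mul_ofReal, Complex.exp_ofReal_mul_I_re, cos_neg]

theorem tendsto_setIntegral_sin_sq_mul_cocompact {S : Set ℝ} {g : ℝ → ℝ} (hS : MeasurableSet S)
    (hg : IntegrableOn g S) :
    Tendsto (fun w => ∫ x in S, sin (w * x) ^ 2 * g x) (cocompact ℝ)
      (𝓝 (2⁻¹ * ∫ x in S, g x)) := by
  have hcos : ∀ w, IntegrableOn (fun x => cos (w * x) * g x) S := fun w =>
    hg.bdd_mul (c := 1) (by fun_prop) (Eventually.of_forall fun x => abs_cos_le_one _)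
  have hsplit : ∀ w, ∫ x in S, sin (w * x) ^ 2 * g x
      = (2⁻¹ * ∫ x in S, g x) - 2⁻¹ * ∫ x in S, cos ((2 * w) * x) * g x := by
    intro w
    rw [← integral_const_mul, ← integral_const_mul, ← integral_sub (hg.const_mul _)
      ((hcos _).const_mul _)]
    congr with x
    rw [sin_sq_eq_half_sub, mul_assoc]
    ring
  have hRL := (tendsto_setIntegral_cos_mul_cocompact hS hg).comp
    (tendsto_cocompact_mul_left₀ (two_ne_zero (α := ℝ)))
  have hlim := (hRL.const_mul 2⁻¹).const_sub (2⁻¹ * ∫ x in S, g x)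
  rw [mul_zero, sub_zero] at hlim
  exact hlim.congr fun w => (hsplit w).symm

theorem integral_comp_mul_left_Ioi_mul_pow (F : ℝ → ℝ) {c : ℝ} (hc : 0 < c) (k : ℕ) :
    ∫ r in Ioi 0, F (c * r) * r ^ k = (c ^ (k + 1))⁻¹ * ∫ τ in Ioi 0, F τ * τ ^ k := by
  have h := integral_comp_mul_left_Ioi (fun τ => F τ * τ ^ k) 0 hc
  simp only [mul_zero, mul_pow, smul_eq_mul] at h
  rw [pow_succ, mul_inv, mul_assoc, ← h, ← integral_const_mul]
  congr with r
  field_simp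

theorem integrableOn_exp_neg_mul_sq_mul_pow {b : ℝ} (hb : 0 < b) (k : ℕ) :
    IntegrableOn (fun x => exp (-(b * x ^ 2)) * x ^ k) (Ioi 0) := by
  refine (integrableOn_rpow_mul_exp_neg_mul_sq hb (s := k)
    (neg_one_lt_zero.trans_le k.cast_nonneg)).congr_fun (fun x _ => ?_) measurableSet_Ioi
  simp [rpow_natCast, mul_comm]

theorem integral_exp_neg_mul_sq_mul_pow {b : ℝ} (hb : 0 < b) (k : ℕ) :
    ∫ x in Ioi 0, exp (-(b * x ^ 2)) * x ^ k
      = b ^ (-(k + 1 : ℝ) / 2) * (1 / 2) * Gamma ((k + 1) / 2) := by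
  rw [← integral_rpow_mul_exp_neg_mul_rpow two_pos (neg_one_lt_zero.trans_le k.cast_nonneg) hb]
  refine setIntegral_congr_fun measurableSet_Ioi fun x _ => ?_
  simp [rpow_natCast, mul_comm]

theorem tendsto_const_mul_sqrt_cocompact {a : ℝ} (ha : 0 < a) :
    Tendsto (fun t => a * √t) atTop (cocompact ℝ) :=
  (tendsto_sqrt_atTop.const_mul_atTop ha).mono_right atTop_le_cocompact

theorem sqrt_pow_mul_integral_sin_sq_mul_exp_eq {t : ℝ} (ht : 0 < t) (a b : ℝ) (k : ℕ) :
    √t ^ (k + 1) * ∫ r in Ioi 0, sin (a * r * t) ^ 2 * exp (-(b * r ^ 2 * t)) * r ^ k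
      = ∫ τ in Ioi 0, sin (a * √t * τ) ^ 2 * (exp (-(b * τ ^ 2)) * τ ^ k) := by
  have hs : 0 < √t := sqrt_pos.2 ht
  have hsq : √t * √t = t := mul_self_sqrt ht.le
  have hrescale := integral_comp_mul_left_Ioi_mul_pow
    (fun τ => sin (a * √t * τ) ^ 2 * exp (-(b * τ ^ 2))) hs k
  have hintegrand : ∀ r, sin (a * √t * (√t * r)) ^ 2 * exp (-(b * (√t * r) ^ 2)) * r ^ k
      = sin (a * r * t) ^ 2 * exp (-(b * r ^ 2 * t)) * r ^ k := fun r => by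
    rw [show a * √t * (√t * r) = a * r * t by linear_combination a * r * hsq,
      show b * (√t * r) ^ 2 = b * r ^ 2 * t by linear_combination b * r ^ 2 * hsq]
  simp only [hintegrand] at hrescale
  rw [hrescale, mul_inv_cancel_left₀ (pow_pos hs _).ne']
  simp only [mul_assoc]

/-- For `n ≥ 1`, `a > 0`, `Γ > 0`:
`lim_{t→∞} t^{n/2} ∫₀^∞ sin²(a r t) e^{−2Γ r² t} r^{n−1} dr = (1/4) (2Γ)^{−n/2} Γ(n/2)`,
where `Γ(·)` on the right-hand side is the Gamma function. -/
theorem stmt_14 (n : ℕ) (hn : 1 ≤ n) (a Γ : ℝ) (ha : 0 < a) (hΓ : 0 < Γ) :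
    Filter.Tendsto
      (fun t : ℝ => t ^ ((n : ℝ) / 2) *
        ∫ r in Set.Ioi (0 : ℝ),
          Real.sin (a * r * t) ^ 2 * Real.exp (-(2 * Γ * r ^ 2 * t)) * r ^ (n - 1))
      Filter.atTop
      (nhds ((1 / 4) * (2 * Γ) ^ (-(n : ℝ) / 2) * Real.Gamma ((n : ℝ) / 2))) := by
  obtain ⟨k, rfl⟩ := Nat.exists_eq_add_of_le' hn
  have hb : 0 < 2 * Γ := by positivity
  have hlim := (tendsto_setIntegral_sin_sq_mul_cocompact measurableSet_Ioi
    (integrableOn_exp_neg_mul_sq_mul_pow hb k)).comp (tendsto_const_mul_sqrt_cocompact ha)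
  rw [integral_exp_neg_mul_sq_mul_pow hb k] at hlim
  convert hlim.congr' ?_ using 2
  · push_cast
    ring
  filter_upwards [eventually_gt_atTop 0] with t ht
  rw [Function.comp_apply, Nat.add_sub_cancel, rpow_div_two_eq_sqrt _ ht.le, rpow_natCast,
    sqrt_pow_mul_integral_sin_sq_mul_exp_eq ht]
end

section
/- Let c₀, D be positive reals and γ > 1. For r > 0 consider the inviscid characteristic cubic R_r(ζ) := ζ³ + γ D r² ζ² + γ c₀² r² ζ + γ D c₀² r⁴. Then: (i) there exist ε₀ ∈ (0,1), C > 0 and functions ζ₁, ζ₂, ζ₃ : (0, ε₀) → ℂ whose values are exactly the three roots of R_r and which satisfy, for all r ∈ (0, ε₀), | ζ₁(r) + D r² | ≤ C r⁴, | ζ₂(r) + i√γ c₀ r + ((γ−1)D/2) r² | ≤ C r³, | ζ₃(r) − i√γ c₀ r + ((γ−1)D/2) r² | ≤ C r³; and (ii) there exist N₀ ≥ 1, C' > 0 and functions ζ₁, ζ₂, ζ₃ : [N₀, ∞) → ℂ whose values are exactly the three roots of R_r and which satisfy, for all r ≥ N₀, | ζ₁(r) + γ D r² | ≤ C', | ζ₂(r)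 + i c₀ r + (γ−1)c₀²/(2γD) | ≤ C' r^{−1}, | ζ₃(r) − i c₀ r + (γ−1)c₀²/(2γD) | ≤ C' r^{−1}. -/
/-- The inviscid characteristic cubic `R_r(ζ) = ζ³ + γD r² ζ² + γc₀² r² ζ + γDc₀² r⁴`. -/
noncomputable def invCubic (c₀ D γ r : ℝ) (z : ℂ) : ℂ :=
  z ^ 3 + ((γ * D * r ^ 2 : ℝ) : ℂ) * z ^ 2
    + ((γ * c₀ ^ 2 * r ^ 2 : ℝ) : ℂ) * z + ((γ * D * c₀ ^ 2 * r ^ 4 : ℝ) : ℂ)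

/-!
`R_r` has real coefficients, so the intermediate value theorem gives a real root `x`. For small `r`,
`R_r(-Dr²) = (γ-1)D³r⁶ > 0` while the slope there is about `γc₀²r²`, so `x = -Dr² + O(r⁴)`.
For large `r`, with `u₀ = (γ-1)c₀²/(γD)` one has `R_r(-γDr² + u₀ + e) = γ²D²r⁴e + O(r²)`, so
`x = -γDr² + u₀ + O(r⁻²)`. Dividing out `z - x` leaves `z² + pz + q` with `p = γDr² + x` and
`q = γc₀²r² + xp`, whose roots `-p/2 ∓ i√(q - p²/4)` inherit their expansions from that of `x`
because `|√t - m| ≤ |t - m²| / m`.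
-/

open Complex Filter Topology

theorem abs_sqrt_sub_le {t m : ℝ} (ht : 0 ≤ t) (hm : 0 < m) : |√t - m| ≤ |t - m ^ 2| / m := by
  rw [le_div_iff₀ hm]
  calc |√t - m| * m ≤ |√t - m| * (√t + m) := by gcongr; linarith [Real.sqrt_nonneg t]
    _ = |(√t - m) * (√t + m)| := by rw [abs_mul, abs_of_nonneg (by positivity : 0 ≤ √t + m)]
    _ = |t - m ^ 2| := by congr 1; linear_combination Real.sq_sqrt ht

theorem norm_ofReal_add_I_mul_le (s t : ℝ) : ‖(s : ℂ) + I * t‖ ≤ |s| + |t| := by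
  simpa using norm_le_abs_re_add_abs_im (s + I * t)

theorem eventually_mul_sq_le (k : ℝ) {ε : ℝ} (hε : 0 < ε) :
    ∀ᶠ r in 𝓝 (0 : ℝ), k * r ^ 2 ≤ ε :=
  ((continuous_const.mul (continuous_pow 2)).tendsto' 0 0 (by simp)).eventually
    (eventually_le_nhds hε)

theorem exists_forall_of_eventually_nhdsGT_zero {P : ℝ → Prop} (h : ∀ᶠ r in 𝓝[>] 0, P r) :
    ∃ ε₀, 0 < ε₀ ∧ ε₀ < 1 ∧ ∀ r, 0 < r → r < ε₀ → P r := by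
  obtain ⟨u, hu, hsub⟩ :=
    (mem_nhdsGT_iff_exists_mem_Ioc_Ioo_subset (by norm_num : (0 : ℝ) < 1 / 2)).1 h
  exact ⟨u, hu.1, by linarith [hu.2], fun r h0 h1 => hsub ⟨h0, h1⟩⟩

theorem exists_forall_of_eventually_atTop {P : ℝ → Prop} (h : ∀ᶠ r in atTop, P r) :
    ∃ N₀, 1 ≤ N₀ ∧ ∀ r, N₀ ≤ r → P r := by
  obtain ⟨N, hN⟩ := eventually_atTop.1 h
  exact ⟨max 1 N, le_max_left _ _, fun r hr => hN r (le_of_max_le_right hr)⟩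

section CubicWithRealRoot

variable {a b c x : ℝ}

/-- For a root `x` of `z³ + az² + bz + c` the cofactor is `z² + pz + q` with `p = a + x`,
`q = b + xp`; this is `q - p²/4`. -/
noncomputable def cofactorDisc (a b x : ℝ) : ℝ := b + x * (a + x) - (a + x) ^ 2 / 4

noncomputable def lowerRoot (a b x : ℝ) : ℂ :=
  ((-(a + x) / 2 : ℝ) : ℂ) - I * (√(cofactorDisc a b x) : ℝ)

noncomputable def upperRoot (a b x : ℝ) : ℂ :=
  ((-(a + x) / 2 : ℝ) : ℂ) + I * (√(cofactorDisc a b x) : ℝ)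

theorem cubic_eq_mul_of_root (hx : x ^ 3 + a * x ^ 2 + b * x + c = 0)
    (hd : 0 ≤ cofactorDisc a b x) (z : ℂ) :
    z ^ 3 + a * z ^ 2 + b * z + c
      = (z - x) * (z - lowerRoot a b x) * (z - upperRoot a b x) := by
  have hxC : (x : ℂ) ^ 3 + a * x ^ 2 + b * x + c = 0 := by exact_mod_cast hx
  have hs : ((√(cofactorDisc a b x) : ℝ) : ℂ) ^ 2 = b + x * (a + x) - (a + x) ^ 2 / 4 := by
    rw [← ofReal_pow, Real.sq_sqrt hd, cofactorDisc]; push_cast; ring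
  simp only [lowerRoot, upperRoot]
  push_cast
  linear_combination hxC - (z - x) * hs + (z - x) * (√(cofactorDisc a b x) : ℂ) ^ 2 * I_sq

theorem norm_lowerRoot_add_le {ω : ℝ} (β : ℝ) (hd : 0 ≤ cofactorDisc a b x) (hω : 0 < ω) :
    ‖lowerRoot a b x + I * ω + β‖
      ≤ |β - (a + x) / 2| + |cofactorDisc a b x - ω ^ 2| / ω := by
  have h : lowerRoot a b x + I * ω + β
      = ((β - (a + x) / 2 : ℝ) : ℂ) + I * ((ω - √(cofactorDisc a b x) : ℝ) : ℂ) := by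
    simp only [lowerRoot]; push_cast; ring
  rw [h]
  exact (norm_ofReal_add_I_mul_le _ _).trans
    (add_le_add_right ((abs_sub_comm _ _).trans_le (abs_sqrt_sub_le hd hω)) _)

theorem norm_upperRoot_sub_le {ω : ℝ} (β : ℝ) (hd : 0 ≤ cofactorDisc a b x) (hω : 0 < ω) :
    ‖upperRoot a b x - I * ω + β‖
      ≤ |β - (a + x) / 2| + |cofactorDisc a b x - ω ^ 2| / ω := by
  have h : upperRoot a b x - I * ω + β
      = ((β - (a + x) / 2 : ℝ) : ℂ) + I * ((√(cofactorDisc a b x) - ω : ℝ) : ℂ) := by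
    simp only [upperRoot]; push_cast; ring
  rw [h]
  exact (norm_ofReal_add_I_mul_le _ _).trans (add_le_add_right (abs_sqrt_sub_le hd hω) _)

end CubicWithRealRoot

section InviscidCubic

variable {c₀ D γ r x u₀ K : ℝ}

noncomputable def invCubicReal (c₀ D γ r t : ℝ) : ℝ :=
  t ^ 3 + γ * D * r ^ 2 * t ^ 2 + γ * c₀ ^ 2 * r ^ 2 * t + γ * D * c₀ ^ 2 * r ^ 4

theorem continuous_invCubicReal : Continuous (invCubicReal c₀ D γ r) := by
  unfold invCubicReal; fun_prop

theorem invCubic_eq_mul (hx : invCubicReal c₀ D γ r x = 0)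
    (hd : 0 ≤ cofactorDisc (γ * D * r ^ 2) (γ * c₀ ^ 2 * r ^ 2) x) (z : ℂ) :
    invCubic c₀ D γ r z = (z - x) * (z - lowerRoot (γ * D * r ^ 2) (γ * c₀ ^ 2 * r ^ 2) x)
      * (z - upperRoot (γ * D * r ^ 2) (γ * c₀ ^ 2 * r ^ 2) x) :=
  cubic_eq_mul_of_root hx hd z

theorem exists_root_invCubicReal_small (hc₀ : 0 < c₀) (hD : 0 < D) (hγ : 1 < γ) :
    ∃ K, 0 ≤ K ∧ ∀ᶠ r in 𝓝 0,
      ∃ x, invCubicReal c₀ D γ r x = 0 ∧ |x + D * r ^ 2| ≤ K * r ^ 4 := by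
  have hγ1 : 0 < γ - 1 := by linarith
  -- twice the first-order correction `(γ-1)D³r⁴/(γc₀²)` of the root, read off from the slope
  set K := 2 * (γ - 1) * D ^ 3 / (γ * c₀ ^ 2)
  have hK : γ * c₀ ^ 2 * K = 2 * (γ - 1) * D ^ 3 := by simp only [K]; field_simp
  refine ⟨K, by positivity, ?_⟩
  filter_upwards [eventually_mul_sq_le K (by positivity : 0 < D / 3)] with r hr
  have hval : ∀ t, invCubicReal c₀ D γ r t
      = t ^ 2 * (t + γ * D * r ^ 2) + γ * c₀ ^ 2 * r ^ 2 * (t + D * r ^ 2) := by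
    intro t; unfold invCubicReal; ring
  have hKr : 0 ≤ K * r ^ 4 := by positivity
  have hleft : invCubicReal c₀ D γ r (-(D * r ^ 2) - K * r ^ 4) ≤ 0 := by
    have hsq : (D + K * r ^ 2) ^ 2 ≤ 2 * D ^ 2 := by
      nlinarith [mul_nonneg (sq_nonneg r) (by positivity : 0 ≤ K)]
    rw [hval]
    calc _ = (γ - 1) * D * r ^ 6 * ((D + K * r ^ 2) ^ 2 - 2 * D ^ 2)
          - (D * r ^ 2 + K * r ^ 4) ^ 2 * (K * r ^ 4) := by
          linear_combination (-(r ^ 6)) * hK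
      _ ≤ 0 := sub_nonpos.2 ((mul_nonpos_of_nonneg_of_nonpos
          (mul_nonneg (mul_nonneg hγ1.le hD.le) (by positivity)) (by linarith)).trans
          (by positivity))
  have hright : 0 ≤ invCubicReal c₀ D γ r (-(D * r ^ 2)) := by
    have h : invCubicReal c₀ D γ r (-(D * r ^ 2)) = (γ - 1) * (D ^ 3 * r ^ 6) := by
      rw [hval]; ring
    rw [h]; exact mul_nonneg hγ1.le (by positivity)
  obtain ⟨x, hx, hroot⟩ := intermediate_value_Icc (by linarith)
    continuous_invCubicReal.continuousOn ⟨hleft, hright⟩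
  exact ⟨x, hroot, abs_le.2 ⟨by linarith [hx.1], by linarith [hx.2]⟩⟩

theorem abs_large_remainder_le {w W : ℝ} (hγ : 0 ≤ γ) (hD : 0 ≤ D) (hw : |w| ≤ W)
    (hr : 1 ≤ r ^ 2) :
    |r ^ 2 * (γ * c₀ ^ 2 * w - 2 * γ * D * w ^ 2) + w ^ 3|
      ≤ (γ * c₀ ^ 2 * W + 2 * γ * D * W ^ 2 + W ^ 3) * r ^ 2 := by
  have hW : 0 ≤ W := (abs_nonneg w).trans hw
  calc _ ≤ r ^ 2 * (γ * c₀ ^ 2 * |w| + 2 * γ * D * |w| ^ 2) + |w| ^ 3 := by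
        refine (abs_add_le _ _).trans ?_
        rw [abs_mul, abs_of_nonneg (sq_nonneg r), abs_pow]
        gcongr
        refine (abs_sub _ _).trans (le_of_eq ?_)
        simp only [abs_mul, abs_pow, sq_abs, abs_of_nonneg hγ, abs_of_nonneg hD, abs_two]
    _ ≤ r ^ 2 * (γ * c₀ ^ 2 * W + 2 * γ * D * W ^ 2) + W ^ 3 := by gcongr
    _ ≤ _ := by nlinarith [pow_nonneg hW 3]

theorem exists_root_invCubicReal_large (hD : 0 < D) (hγ : 0 < γ)
    (hu : γ * D * u₀ = (γ - 1) * c₀ ^ 2) :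
    ∃ K, 0 ≤ K ∧ ∀ᶠ r in atTop,
      ∃ x, invCubicReal c₀ D γ r x = 0 ∧ |x + γ * D * r ^ 2 - u₀| ≤ K / r ^ 2 := by
  set W := |u₀| + 1
  set K := (γ * c₀ ^ 2 * W + 2 * γ * D * W ^ 2 + W ^ 3) / (γ ^ 2 * D ^ 2)
  have hK : γ ^ 2 * D ^ 2 * K = γ * c₀ ^ 2 * W + 2 * γ * D * W ^ 2 + W ^ 3 := by
    simp only [K]; field_simp
  refine ⟨K, by positivity, ?_⟩
  filter_upwards [(tendsto_pow_atTop two_ne_zero).eventually_ge_atTop (max 1 K)] with r hr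
  have hr2 : 0 < r ^ 2 := one_pos.trans_le (le_of_max_le_left hr)
  have hE : K / r ^ 2 ≤ 1 := (div_le_one hr2).2 (le_of_max_le_right hr)
  have hval : ∀ e, invCubicReal c₀ D γ r (-(γ * D * r ^ 2) + u₀ + e) = γ ^ 2 * D ^ 2 * r ^ 4 * e
      + (r ^ 2 * (γ * c₀ ^ 2 * (u₀ + e) - 2 * γ * D * (u₀ + e) ^ 2) + (u₀ + e) ^ 3) := by
    intro e; unfold invCubicReal; linear_combination (γ * D * r ^ 4) * hu
  have hlead : γ ^ 2 * D ^ 2 * r ^ 4 * (K / r ^ 2) = γ ^ 2 * D ^ 2 * K * r ^ 2 := by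
    field_simp
  have hrem : ∀ e, |e| ≤ K / r ^ 2 → |r ^ 2 * (γ * c₀ ^ 2 * (u₀ + e) - 2 * γ * D * (u₀ + e) ^ 2)
      + (u₀ + e) ^ 3| ≤ γ ^ 2 * D ^ 2 * K * r ^ 2 := by
    intro e he
    rw [hK]
    exact abs_large_remainder_le hγ.le hD.le ((abs_add_le _ _).trans (by linarith))
      (le_of_max_le_left hr)
  have hKr : 0 ≤ K / r ^ 2 := by positivity
  have hleft : invCubicReal c₀ D γ r (-(γ * D * r ^ 2) + u₀ + -(K / r ^ 2)) ≤ 0 := by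
    rw [hval, mul_neg, hlead]
    linarith [(abs_le.1 (hrem _ (abs_neg (K / r ^ 2) ▸ (abs_of_nonneg hKr).le))).2]
  have hright : 0 ≤ invCubicReal c₀ D γ r (-(γ * D * r ^ 2) + u₀ + K / r ^ 2) := by
    rw [hval, hlead]
    linarith [(abs_le.1 (hrem _ (abs_of_nonneg hKr).le)).1]
  obtain ⟨x, hx, hroot⟩ := intermediate_value_Icc (by linarith)
    continuous_invCubicReal.continuousOn ⟨hleft, hright⟩
  exact ⟨x, hroot, abs_le.2 ⟨by linarith [hx.1], by linarith [hx.2]⟩⟩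

theorem abs_cofactorDisc_sub_le_small (hD : 0 ≤ D) (hγ : 1 ≤ γ) (hK : 0 ≤ K) (hr : r ^ 2 ≤ 1)
    (hx : |x + D * r ^ 2| ≤ K * r ^ 4) :
    |cofactorDisc (γ * D * r ^ 2) (γ * c₀ ^ 2 * r ^ 2) x - γ * c₀ ^ 2 * r ^ 2|
      ≤ 2 * (γ * D + K) ^ 2 * r ^ 4 := by
  have hKr : K * r ^ 4 ≤ K * r ^ 2 := mul_le_mul_of_nonneg_left (by nlinarith [sq_nonneg r]) hK
  have hDr : 0 ≤ (γ - 1) * D * r ^ 2 := mul_nonneg (mul_nonneg (by linarith) hD) (sq_nonneg r)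
  have hDr' : 0 ≤ D * r ^ 2 := by positivity
  obtain ⟨h1, h2⟩ := abs_le.1 hx
  have hxL : |x| ≤ (γ * D + K) * r ^ 2 := abs_le.2 ⟨by linarith, by linarith⟩
  have hpL : |γ * D * r ^ 2 + x| ≤ (γ * D + K) * r ^ 2 := abs_le.2 ⟨by linarith, by linarith⟩
  calc _ = |x * (γ * D * r ^ 2 + x) - (γ * D * r ^ 2 + x) ^ 2 / 4| := by
        unfold cofactorDisc; ring_nf
    _ ≤ |x| * |γ * D * r ^ 2 + x| + |γ * D * r ^ 2 + x| ^ 2 / 4 := by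
        refine (abs_sub _ _).trans (le_of_eq ?_)
        rw [abs_mul, abs_div, abs_pow, abs_of_pos (by norm_num : (0 : ℝ) < 4)]
    _ ≤ ((γ * D + K) * r ^ 2) * ((γ * D + K) * r ^ 2) + ((γ * D + K) * r ^ 2) ^ 2 / 4 := by
        gcongr
    _ ≤ _ := by nlinarith [sq_nonneg ((γ * D + K) * r ^ 2)]

theorem abs_cofactorDisc_sub_le_large (hγD : 0 ≤ γ * D) (hu : γ * D * u₀ = (γ - 1) * c₀ ^ 2)
    (hr : r ≠ 0) (hK : K / r ^ 2 ≤ 1) (hx : |x + γ * D * r ^ 2 - u₀| ≤ K / r ^ 2) :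
    |cofactorDisc (γ * D * r ^ 2) (γ * c₀ ^ 2 * r ^ 2) x - c₀ ^ 2 * r ^ 2|
      ≤ γ * D * K + (|u₀| + 1) ^ 2 := by
  set p := γ * D * r ^ 2 + x
  have hpu : |u₀ - p| ≤ K / r ^ 2 := by rw [abs_sub_comm]; convert hx using 2; ring
  have hp : |p| ≤ |u₀| + 1 := by
    calc |p| = |u₀ - (u₀ - p)| := by ring_nf
      _ ≤ |u₀| + |u₀ - p| := abs_sub _ _
      _ ≤ |u₀| + 1 := by linarith
  calc _ = |γ * D * r ^ 2 * (u₀ - p) + 3 / 4 * p ^ 2| := by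
        unfold cofactorDisc; congr 1; linear_combination (-(r ^ 2)) * hu
    _ ≤ γ * D * r ^ 2 * |u₀ - p| + 3 / 4 * |p| ^ 2 := by
        refine (abs_add_le _ _).trans (le_of_eq ?_)
        rw [abs_mul (γ * D * r ^ 2), abs_mul (3 / 4), abs_pow,
          abs_of_nonneg (by positivity : 0 ≤ γ * D * r ^ 2),
          abs_of_pos (by norm_num : (0 : ℝ) < 3 / 4)]
    _ ≤ γ * D * r ^ 2 * (K / r ^ 2) + 3 / 4 * (|u₀| + 1) ^ 2 := by gcongr
    _ ≤ _ := by
        rw [mul_assoc, mul_div_cancel₀ _ (pow_ne_zero 2 hr)]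
        nlinarith [sq_nonneg (|u₀| + 1)]

theorem invCubic_roots_small (hc₀ : 0 < c₀) (hD : 0 < D) (hγ : 1 < γ) :
    ∃ C, 0 < C ∧ ∀ᶠ r in 𝓝[>] 0, ∃ x : ℝ,
      (∀ z, invCubic c₀ D γ r z = (z - x) * (z - lowerRoot (γ * D * r ^ 2) (γ * c₀ ^ 2 * r ^ 2) x)
        * (z - upperRoot (γ * D * r ^ 2) (γ * c₀ ^ 2 * r ^ 2) x)) ∧
      ‖(x : ℂ) + ((D * r ^ 2 : ℝ) : ℂ)‖ ≤ C * r ^ 4 ∧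
      ‖lowerRoot (γ * D * r ^ 2) (γ * c₀ ^ 2 * r ^ 2) x + I * ((√γ * c₀ * r : ℝ) : ℂ)
          + (((γ - 1) * D / 2 * r ^ 2 : ℝ) : ℂ)‖ ≤ C * r ^ 3 ∧
      ‖upperRoot (γ * D * r ^ 2) (γ * c₀ ^ 2 * r ^ 2) x - I * ((√γ * c₀ * r : ℝ) : ℂ)
          + (((γ - 1) * D / 2 * r ^ 2 : ℝ) : ℂ)‖ ≤ C * r ^ 3 := by
  obtain ⟨K, hK, hroot⟩ := exists_root_invCubicReal_small hc₀ hD hγ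
  have hγ0 : 0 < γ := by linarith
  set A := 2 * (γ * D + K) ^ 2
  refine ⟨K + A / (√γ * c₀), by positivity, ?_⟩
  filter_upwards [nhdsWithin_le_nhds (hroot.and ((eventually_mul_sq_le A
      (by positivity : 0 < γ * c₀ ^ 2)).and (eventually_le_nhds one_pos))), self_mem_nhdsWithin]
    with r ⟨⟨x, hx, hxK⟩, hAr, hr1⟩ (hr : 0 < r)
  have hdisc := abs_cofactorDisc_sub_le_small (c₀ := c₀) hD.le hγ.le hK (by nlinarith) hxK
  have hd : 0 ≤ cofactorDisc (γ * D * r ^ 2) (γ * c₀ ^ 2 * r ^ 2) x := by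
    nlinarith [(abs_le.1 hdisc).1, sq_nonneg r]
  have hω : 0 < √γ * c₀ * r := by positivity
  have hpair : |(γ - 1) * D / 2 * r ^ 2 - (γ * D * r ^ 2 + x) / 2|
      + |cofactorDisc (γ * D * r ^ 2) (γ * c₀ ^ 2 * r ^ 2) x - (√γ * c₀ * r) ^ 2| / (√γ * c₀ * r)
      ≤ (K + A / (√γ * c₀)) * r ^ 3 := by
    have hre : |(γ - 1) * D / 2 * r ^ 2 - (γ * D * r ^ 2 + x) / 2| ≤ K * r ^ 3 := by
      rw [show (γ - 1) * D / 2 * r ^ 2 - (γ * D * r ^ 2 + x) / 2 = -((x + D * r ^ 2) / 2) by ring,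
        abs_neg, abs_div, abs_two]
      nlinarith [mul_nonneg hK (pow_nonneg hr.le 3)]
    have him : |cofactorDisc (γ * D * r ^ 2) (γ * c₀ ^ 2 * r ^ 2) x - (√γ * c₀ * r) ^ 2|
        / (√γ * c₀ * r) ≤ A / (√γ * c₀) * r ^ 3 := by
      rw [div_le_iff₀ hω, mul_pow, mul_pow, Real.sq_sqrt hγ0.le]
      calc _ ≤ A * r ^ 4 := hdisc
        _ = _ := by field_simp
    linarith
  refine ⟨x, invCubic_eq_mul hx hd, ?_, (norm_lowerRoot_add_le _ hd hω).trans hpair,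
    (norm_upperRoot_sub_le _ hd hω).trans hpair⟩
  rw [← ofReal_add, norm_real, Real.norm_eq_abs]
  exact hxK.trans (by gcongr; exact le_add_of_nonneg_right (by positivity))

theorem invCubic_roots_large (hc₀ : 0 < c₀) (hD : 0 < D) (hγ : 0 < γ) :
    ∃ C, 0 < C ∧ ∀ᶠ r in atTop, ∃ x : ℝ,
      (∀ z, invCubic c₀ D γ r z = (z - x) * (z - lowerRoot (γ * D * r ^ 2) (γ * c₀ ^ 2 * r ^ 2) x)
        * (z - upperRoot (γ * D * r ^ 2) (γ * c₀ ^ 2 * r ^ 2) x)) ∧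
      ‖(x : ℂ) + ((γ * D * r ^ 2 : ℝ) : ℂ)‖ ≤ C ∧
      ‖lowerRoot (γ * D * r ^ 2) (γ * c₀ ^ 2 * r ^ 2) x + I * ((c₀ * r : ℝ) : ℂ)
          + (((γ - 1) * c₀ ^ 2 / (2 * γ * D) : ℝ) : ℂ)‖ ≤ C * r⁻¹ ∧
      ‖upperRoot (γ * D * r ^ 2) (γ * c₀ ^ 2 * r ^ 2) x - I * ((c₀ * r : ℝ) : ℂ)
          + (((γ - 1) * c₀ ^ 2 / (2 * γ * D) : ℝ) : ℂ)‖ ≤ C * r⁻¹ := by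
  set u₀ := (γ - 1) * c₀ ^ 2 / (γ * D)
  have hu : γ * D * u₀ = (γ - 1) * c₀ ^ 2 := by simp only [u₀]; field_simp
  have hβ : (γ - 1) * c₀ ^ 2 / (2 * γ * D) = u₀ / 2 := by simp only [u₀]; field_simp
  obtain ⟨K, hK, hroot⟩ := exists_root_invCubicReal_large hD hγ hu
  set M := γ * D * K + (|u₀| + 1) ^ 2
  refine ⟨|u₀| + 1 + (K / 2 + M / c₀), by positivity, ?_⟩
  filter_upwards [hroot, eventually_ge_atTop 1,
    (tendsto_pow_atTop two_ne_zero).eventually_ge_atTop K,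
    ((tendsto_pow_atTop two_ne_zero).const_mul_atTop
      (by positivity : 0 < c₀ ^ 2)).eventually_ge_atTop M]
    with r ⟨x, hx, hxK⟩ hr1 hKr hMr
  have hr : 0 < r := by linarith
  have hK1 : K / r ^ 2 ≤ 1 := (div_le_one (by positivity)).2 hKr
  have hdisc := abs_cofactorDisc_sub_le_large (mul_pos hγ hD).le hu hr.ne' hK1 hxK
  have hd : 0 ≤ cofactorDisc (γ * D * r ^ 2) (γ * c₀ ^ 2 * r ^ 2) x := by
    linarith [(abs_le.1 hdisc).1]
  have hω : 0 < c₀ * r := by positivity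
  have hpair : |(γ - 1) * c₀ ^ 2 / (2 * γ * D) - (γ * D * r ^ 2 + x) / 2|
      + |cofactorDisc (γ * D * r ^ 2) (γ * c₀ ^ 2 * r ^ 2) x - (c₀ * r) ^ 2| / (c₀ * r)
      ≤ (|u₀| + 1 + (K / 2 + M / c₀)) * r⁻¹ := by
    have hre : |(γ - 1) * c₀ ^ 2 / (2 * γ * D) - (γ * D * r ^ 2 + x) / 2| ≤ K / 2 * r⁻¹ := by
      rw [hβ, show u₀ / 2 - (γ * D * r ^ 2 + x) / 2 = -((x + γ * D * r ^ 2 - u₀) / 2) by ring,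
        abs_neg, abs_div, abs_two]
      calc _ ≤ K / r ^ 2 / 2 := by gcongr
        _ ≤ K / 2 * r⁻¹ := by
          rw [div_div, mul_comm, ← div_eq_mul_inv, div_div]
          gcongr; nlinarith
    have him : |cofactorDisc (γ * D * r ^ 2) (γ * c₀ ^ 2 * r ^ 2) x - (c₀ * r) ^ 2| / (c₀ * r)
        ≤ M / c₀ * r⁻¹ := by
      rw [div_le_iff₀ hω, mul_pow]
      calc _ ≤ M := hdisc
        _ = _ := by field_simp
    have : 0 ≤ (|u₀| + 1) * r⁻¹ := by positivity
    linarith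
  refine ⟨x, invCubic_eq_mul hx hd, ?_, (norm_lowerRoot_add_le _ hd hω).trans hpair,
    (norm_upperRoot_sub_le _ hd hω).trans hpair⟩
  rw [← ofReal_add, norm_real, Real.norm_eq_abs]
  calc |x + γ * D * r ^ 2| = |u₀ + (x + γ * D * r ^ 2 - u₀)| := by ring_nf
    _ ≤ |u₀| + |x + γ * D * r ^ 2 - u₀| := abs_add_le _ _
    _ ≤ _ := by
        have : 0 ≤ K / 2 + M / c₀ := by positivity
        linarith

end InviscidCubic

/-- Root expansions for the inviscid characteristic cubic `R_r`:
(i) for small `r` there are roots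
`ζ₁ = −D r² + O(r⁴)`, `ζ_{2,3} = ∓i√γ c₀ r − ((γ−1)D/2) r² + O(r³)`;
(ii) for large `r` there are roots
`ζ₁ = −γD r² + O(1)`, `ζ_{2,3} = ∓i c₀ r − (γ−1)c₀²/(2γD) + O(r⁻¹)`.
In both regimes `ζ₁(r), ζ₂(r), ζ₃(r)` are exactly the three roots of `R_r`. -/
theorem stmt_17 (c₀ D γ : ℝ) (hc₀ : 0 < c₀) (hD : 0 < D) (hγ : 1 < γ) :
    (∃ ε₀ : ℝ, 0 < ε₀ ∧ ε₀ < 1 ∧ ∃ C : ℝ, 0 < C ∧ ∃ z1 z2 z3 : ℝ → ℂ,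
      ∀ r : ℝ, 0 < r → r < ε₀ →
        (∀ z : ℂ, invCubic c₀ D γ r z = (z - z1 r) * (z - z2 r) * (z - z3 r)) ∧
        ‖z1 r + ((D * r ^ 2 : ℝ) : ℂ)‖ ≤ C * r ^ 4 ∧
        ‖z2 r + Complex.I * ((Real.sqrt γ * c₀ * r : ℝ) : ℂ)
            + (((γ - 1) * D / 2 * r ^ 2 : ℝ) : ℂ)‖ ≤ C * r ^ 3 ∧
        ‖z3 r - Complex.I * ((Real.sqrt γ * c₀ * r : ℝ) : ℂ)
            + (((γ - 1) * D / 2 * r ^ 2 : ℝ) : ℂ)‖ ≤ C * r ^ 3) ∧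
    (∃ N₀ : ℝ, 1 ≤ N₀ ∧ ∃ C' : ℝ, 0 < C' ∧ ∃ z1 z2 z3 : ℝ → ℂ,
      ∀ r : ℝ, N₀ ≤ r →
        (∀ z : ℂ, invCubic c₀ D γ r z = (z - z1 r) * (z - z2 r) * (z - z3 r)) ∧
        ‖z1 r + ((γ * D * r ^ 2 : ℝ) : ℂ)‖ ≤ C' ∧
        ‖z2 r + Complex.I * ((c₀ * r : ℝ) : ℂ)
            + (((γ - 1) * c₀ ^ 2 / (2 * γ * D) : ℝ) : ℂ)‖ ≤ C' * r⁻¹ ∧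
        ‖z3 r - Complex.I * ((c₀ * r : ℝ) : ℂ)
            + (((γ - 1) * c₀ ^ 2 / (2 * γ * D) : ℝ) : ℂ)‖ ≤ C' * r⁻¹) := by
  obtain ⟨C, hC, hsmall⟩ := invCubic_roots_small hc₀ hD hγ
  obtain ⟨C', hC', hlarge⟩ := invCubic_roots_large hc₀ hD (zero_lt_one.trans hγ)
  obtain ⟨ε₀, hε₀, hε₀1, hsmall⟩ := exists_forall_of_eventually_nhdsGT_zero hsmall
  obtain ⟨N₀, hN₀, hlarge⟩ := exists_forall_of_eventually_atTop hlarge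
  choose! x hx using hsmall
  choose! y hy using hlarge
  exact ⟨⟨ε₀, hε₀, hε₀1, C, hC, fun r => x r,
      fun r => lowerRoot (γ * D * r ^ 2) (γ * c₀ ^ 2 * r ^ 2) (x r),
      fun r => upperRoot (γ * D * r ^ 2) (γ * c₀ ^ 2 * r ^ 2) (x r), hx⟩,
    ⟨N₀, hN₀, C', hC', fun r => y r,
      fun r => lowerRoot (γ * D * r ^ 2) (γ * c₀ ^ 2 * r ^ 2) (y r),
      fun r => upperRoot (γ * D * r ^ 2) (γ * c₀ ^ 2 * r ^ 2) (y r), hy⟩⟩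
end
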